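/- Let ν ∈ (−1,0) and 0 ≤ β < 1, and let x_{ν,β} be a positive root of the equation r I_ν'(r) − βν I_ν(r) = 0, where I_ν is the modified Bessel function of the first kind. Then x_{ν,β}² < (−ν(1−β)/(2 + ν(1−β))) j_{ν,1}² < j_{ν,1}², where j_{ν,1} is the smallest positive zero of J_ν; in particular x_{ν,β} < j_{ν,1}. -/

import Mathlib

open Complex

/-- The Bessel function of the first kind `J_ν`, defined by its series with
principal-branch complex powers. -/
noncomputable def besselJ (ν : ℝ) (z : ℂ) : ℂ :=
  ∑' n : ℕ, ((-1 : ℂ) ^ n / ((n.factorial : ℂ) * Complex.Gamma ((n : ℂ) + ν + 1))) *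
    (z / 2) ^ (2 * (n : ℂ) + ν)

/-- The modified Bessel function of the first kind `I_ν`. -/
noncomputable def besselI (ν : ℝ) (z : ℂ) : ℂ :=
  ∑' n : ℕ, (1 / ((n.factorial : ℂ) * Complex.Gamma ((n : ℂ) + ν + 1))) *
    (z / 2) ^ (2 * (n : ℂ) + ν)

/-- The normalization `f_ν(z) = exp((1/ν) Log(2^ν Γ(ν+1) J_ν(z)))`. -/
noncomputable def besselF (ν : ℝ) (z : ℂ) : ℂ :=
  Complex.exp ((ν : ℂ)⁻¹ *
    Complex.log ((2 : ℂ) ^ (ν : ℂ) * Complex.Gamma ((ν : ℂ) + 1) * besselJ ν z))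

/-- The normalization `g_ν(z) = 2^ν Γ(ν+1) z^{1-ν} J_ν(z)`. -/
noncomputable def besselG (ν : ℝ) (z : ℂ) : ℂ :=
  (2 : ℂ) ^ (ν : ℂ) * Complex.Gamma ((ν : ℂ) + 1) * z ^ ((1 : ℂ) - ν) * besselJ ν z

/-- The normalization `h_ν(z) = 2^ν Γ(ν+1) z^{1-ν/2} J_ν(√z)`. -/
noncomputable def besselH (ν : ℝ) (z : ℂ) : ℂ :=
  (2 : ℂ) ^ (ν : ℂ) * Complex.Gamma ((ν : ℂ) + 1) * z ^ ((1 : ℂ) - (ν : ℂ) / 2) *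
    besselJ ν (z ^ (1 / 2 : ℂ))

/-- The radius of starlikeness of order `β` of a function `f` analytic near `0`
with `f(0) = 0`, `f'(0) = 1`:
`r*_β(f) = sup { r > 0 : Re[z f'(z)/f(z)] > β for all 0 < |z| < r }`. -/
noncomputable def radiusOfStarlikeness (β : ℝ) (f : ℂ → ℂ) : ℝ :=
  sSup {r : ℝ | 0 < r ∧ ∀ z : ℂ, 0 < ‖z‖ → ‖z‖ < r →
    β < (z * deriv f z / f z).re}

/-!
Write `a n = 1 / (4ⁿ n! Γ(n + ν + 1)) > 0` and `A(w) = ∑ a n wⁿ`, an entire function, so that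
`I_ν(z) = (z/2)^ν A(z²)` and `J_ν(z) = (z/2)^ν A(-z²)`. With `t = x²` the root equation
becomes `2 t A'(t) = -ν(1-β) A(t)`. Since `a (n+1) s ≤ a n` for `s ≤ 4(ν+1)`, the alternating
series `A(-s)` is positive there, hence `j² > 4(ν+1) = a 0 / a 1`. As
`A(t) - t A'(t) = ∑ (1-n) a n tⁿ ≤ a 0` and `t A'(t) ≥ a 1 t`, we get
`t A(t) < (j² + t) t A'(t)`; with the root equation this is `2t < -ν(1-β) (j² + t)`, which
rearranges to the claim.
-/

open Filter Topology

noncomputable def besselCoeff (ν : ℝ) (n : ℕ) : ℝ :=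
  1 / (4 ^ n * n.factorial * Real.Gamma (n + ν + 1))

lemma besselCoeff_pos {ν : ℝ} (hν : -1 < ν) (n : ℕ) : 0 < besselCoeff ν n := by
  have hpos : 0 < (n : ℝ) + ν + 1 := by linarith [n.cast_nonneg (α := ℝ)]
  have := Real.Gamma_pos_of_pos hpos
  unfold besselCoeff
  positivity

lemma besselCoeff_eq_mul_succ {ν : ℝ} (hν : -1 < ν) (n : ℕ) :
    besselCoeff ν n = 4 * (n + 1) * (n + ν + 1) * besselCoeff ν (n + 1) := by
  have hpos : 0 < (n : ℝ) + ν + 1 := by linarith [n.cast_nonneg (α := ℝ)]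
  have hΓ : Real.Gamma ((n + 1 : ℕ) + ν + 1) = (n + ν + 1) * Real.Gamma (n + ν + 1) := by
    rw [← Real.Gamma_add_one hpos.ne']
    push_cast
    ring_nf
  have := Real.Gamma_pos_of_pos hpos
  simp only [besselCoeff, hΓ, Nat.factorial_succ, pow_succ]
  push_cast
  field_simp

lemma summable_succ_mul_besselCoeff_mul_pow {ν r : ℝ} (hν : -1 < ν) (hr : 0 ≤ r) :
    Summable fun n : ℕ => ((n : ℝ) + 1) * besselCoeff ν n * r ^ n := by
  refine summable_of_ratio_norm_eventually_le (r := 1 / 2) (by norm_num) ?_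
  filter_upwards [eventually_ge_atTop ⌈r⌉₊] with n hn
  have hrn : r ≤ n := (Nat.le_ceil r).trans (by exact_mod_cast hn)
  have ha : 0 ≤ besselCoeff ν (n + 1) * r ^ n :=
    mul_nonneg (besselCoeff_pos hν (n + 1)).le (pow_nonneg hr n)
  have hn0 : (0 : ℝ) ≤ n := n.cast_nonneg
  have hratio : ((n : ℝ) + 1 + 1) * r ≤ 2 * ((n : ℝ) + 1) ^ 2 * (n + ν + 1) := by
    nlinarith [mul_le_mul_of_nonneg_left hrn (by linarith : (0 : ℝ) ≤ n + 1 + 1),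
      mul_pos (by linarith : (0 : ℝ) < ν + 1) (by positivity : (0 : ℝ) < ((n : ℝ) + 1) ^ 2),
      mul_nonneg (mul_nonneg hn0 hn0) hn0, mul_nonneg hn0 hn0]
  have hnonneg : ∀ m : ℕ, 0 ≤ ((m : ℝ) + 1) * besselCoeff ν m * r ^ m := fun m =>
    mul_nonneg (mul_nonneg (by positivity) (besselCoeff_pos hν m).le) (pow_nonneg hr m)
  rw [Real.norm_of_nonneg (hnonneg _), Real.norm_of_nonneg (hnonneg _),
    besselCoeff_eq_mul_succ hν n]
  calc _ = (besselCoeff ν (n + 1) * r ^ n) * (((n : ℝ) + 1 + 1) * r) := by push_cast; ring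
    _ ≤ (besselCoeff ν (n + 1) * r ^ n) * (2 * ((n : ℝ) + 1) ^ 2 * (n + ν + 1)) :=
      mul_le_mul_of_nonneg_left hratio ha
    _ = _ := by ring

lemma summable_besselCoeff_mul_pow {ν r : ℝ} (hν : -1 < ν) (hr : 0 ≤ r) :
    Summable fun n : ℕ => besselCoeff ν n * r ^ n :=
  (summable_succ_mul_besselCoeff_mul_pow hν hr).of_nonneg_of_le
    (fun n => mul_nonneg (besselCoeff_pos hν n).le (pow_nonneg hr n)) fun n => by
      rw [mul_assoc]
      exact le_mul_of_one_le_left (mul_nonneg (besselCoeff_pos hν n).le (pow_nonneg hr n))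
        (by linarith [n.cast_nonneg (α := ℝ)])

lemma summable_natCast_mul_besselCoeff_mul_pow {ν r : ℝ} (hν : -1 < ν) (hr : 0 ≤ r) :
    Summable fun n : ℕ => (n : ℝ) * besselCoeff ν n * r ^ n :=
  (summable_succ_mul_besselCoeff_mul_pow hν hr).of_nonneg_of_le
    (fun n => by have := besselCoeff_pos hν n; positivity) fun n => by
      simp only [mul_assoc]
      exact mul_le_mul_of_nonneg_right (by linarith)
        (mul_nonneg (besselCoeff_pos hν n).le (pow_nonneg hr n))

theorem hasDerivAt_tsum_mul_pow {𝕜 : Type*} [RCLike 𝕜] {c : ℕ → 𝕜}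
    (hc : ∀ r : ℝ, 0 ≤ r → Summable fun n : ℕ => ((n : ℝ) + 1) * ‖c n‖ * r ^ n)
    (w : 𝕜) :
    HasDerivAt (fun z => ∑' n, c n * z ^ n) (∑' n, c n * (n * w ^ (n - 1))) w := by
  set R := ‖w‖ + 1
  have hR : 1 ≤ R := le_add_of_nonneg_left (norm_nonneg w)
  refine hasDerivAt_tsum_of_isPreconnected (hc R (by linarith)) Metric.isOpen_ball
    (convex_ball 0 R).isPreconnected (fun n z _ => (hasDerivAt_pow n z).const_mul (c n))
    (fun n z hz => ?_) (Metric.mem_ball_self (by linarith)) ?_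
    (mem_ball_zero_iff.2 (by linarith))
  · rw [mem_ball_zero_iff] at hz
    calc ‖c n * (n * z ^ (n - 1))‖ = ‖c n‖ * n * ‖z‖ ^ (n - 1) := by
          simp [norm_mul, norm_pow, mul_assoc]
      _ ≤ ‖c n‖ * (n + 1) * R ^ n := by
          gcongr
          · linarith
          · exact (pow_le_pow_left₀ (norm_nonneg z) hz.le _).trans
              (pow_le_pow_right₀ hR (Nat.sub_le n 1))
      _ = _ := by ring
  · exact summable_of_ne_finset_zero (s := {0}) fun n hn => by
      simp [zero_pow (Finset.notMem_singleton.1 hn)]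

noncomputable def besselSeries (ν : ℝ) (w : ℂ) : ℂ :=
  ∑' n : ℕ, (besselCoeff ν n : ℂ) * w ^ n

lemma besselSeries_ofReal (ν t : ℝ) :
    besselSeries ν t = ((∑' n : ℕ, besselCoeff ν n * t ^ n : ℝ) : ℂ) := by
  simp only [besselSeries, ofReal_tsum, ofReal_mul, ofReal_pow]

lemma hasDerivAt_besselSeries {ν : ℝ} (hν : -1 < ν) (w : ℂ) :
    HasDerivAt (besselSeries ν) (∑' n : ℕ, (besselCoeff ν n : ℂ) * (n * w ^ (n - 1))) w :=
  hasDerivAt_tsum_mul_pow (fun r hr => by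
    simpa only [norm_real, Real.norm_of_nonneg (besselCoeff_pos hν _).le]
      using summable_succ_mul_besselCoeff_mul_pow hν hr) w

lemma ofReal_mul_deriv_besselSeries {ν : ℝ} (hν : -1 < ν) (t : ℝ) :
    (t : ℂ) * deriv (besselSeries ν) t =
      ((∑' n : ℕ, (n : ℝ) * besselCoeff ν n * t ^ n : ℝ) : ℂ) := by
  rw [(hasDerivAt_besselSeries hν t).deriv, ← tsum_mul_left, ofReal_tsum]
  refine tsum_congr fun n => ?_
  cases n with
  | zero => simp
  | succ m => push_cast; ring

lemma one_div_mul_cpow_two_mul_add (ν : ℝ) {z : ℂ} (hz : z ≠ 0) (n : ℕ) :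
    1 / ((n.factorial : ℂ) * Complex.Gamma (n + ν + 1)) * (z / 2) ^ (2 * (n : ℂ) + ν) =
      (z / 2) ^ (ν : ℂ) * (besselCoeff ν n * (z ^ 2) ^ n) := by
  have hΓ : Complex.Gamma (n + ν + 1) = Real.Gamma (n + ν + 1) := by
    rw [← Complex.Gamma_ofReal]
    push_cast
    rfl
  have hpow : (z / 2) ^ (2 * n) = (z ^ 2) ^ n / 4 ^ n := by
    rw [pow_mul, div_pow, div_pow]
    norm_num
  rw [cpow_add _ _ (div_ne_zero hz two_ne_zero),
    show 2 * (n : ℂ) = ((2 * n : ℕ) : ℂ) by push_cast; rfl, cpow_natCast, hpow, hΓ,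
    besselCoeff]
  push_cast
  ring

lemma besselI_eq_cpow_mul_besselSeries (ν : ℝ) {z : ℂ} (hz : z ≠ 0) :
    besselI ν z = (z / 2) ^ (ν : ℂ) * besselSeries ν (z ^ 2) := by
  rw [besselI, besselSeries, ← tsum_mul_left]
  exact tsum_congr (one_div_mul_cpow_two_mul_add ν hz)

lemma besselJ_eq_cpow_mul_besselSeries (ν : ℝ) {z : ℂ} (hz : z ≠ 0) :
    besselJ ν z = (z / 2) ^ (ν : ℂ) * besselSeries ν (-z ^ 2) := by
  rw [besselJ, besselSeries, ← tsum_mul_left]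
  refine tsum_congr fun n => ?_
  rw [neg_pow (z ^ 2), div_eq_mul_one_div ((-1 : ℂ) ^ n), mul_assoc,
    one_div_mul_cpow_two_mul_add ν hz]
  ring

lemma mul_deriv_besselI {ν : ℝ} (hν : -1 < ν) {z : ℂ} (hz : z ∈ slitPlane) :
    z * deriv (besselI ν) z = (z / 2) ^ (ν : ℂ) *
      (ν * besselSeries ν (z ^ 2) + 2 * (z ^ 2 * deriv (besselSeries ν) (z ^ 2))) := by
  have hz0 : z ≠ 0 := slitPlane_ne_zero hz
  have hz2 : z / 2 ∈ slitPlane := by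
    rw [mem_slitPlane_iff] at hz ⊢
    simpa using hz
  have hpow : HasDerivAt (fun z : ℂ => (z / 2) ^ (ν : ℂ))
      (ν * (z / 2) ^ ((ν : ℂ) - 1) * (1 / 2)) z :=
    ((hasDerivAt_id z).div_const 2).cpow_const hz2
  have hser := (hasDerivAt_besselSeries hν (z ^ 2)).comp z (hasDerivAt_pow 2 z)
  have heq : besselI ν =ᶠ[𝓝 z] fun z => (z / 2) ^ (ν : ℂ) * besselSeries ν (z ^ 2) := by
    filter_upwards [isOpen_compl_singleton.mem_nhds hz0] with y hy
    exact besselI_eq_cpow_mul_besselSeries ν hy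
  rw [((hpow.mul hser).congr_of_eventuallyEq heq).deriv, (hasDerivAt_besselSeries hν _).deriv,
    cpow_sub _ _ (div_ne_zero hz0 two_ne_zero), cpow_one, Function.comp_apply]
  field_simp
  ring

lemma two_mul_tsum_eq_of_root {ν β x : ℝ} (hν : -1 < ν) (hx : 0 < x)
    (hroot : (x : ℂ) * deriv (besselI ν) (x : ℂ) - ((β * ν : ℝ) : ℂ) * besselI ν (x : ℂ) = 0) :
    2 * ∑' n : ℕ, (n : ℝ) * besselCoeff ν n * (x ^ 2) ^ n =
      -(ν * (1 - β)) * ∑' n : ℕ, besselCoeff ν n * (x ^ 2) ^ n := by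
  have hx0 : (x : ℂ) ≠ 0 := ofReal_ne_zero.2 hx.ne'
  have hsq : (x : ℂ) ^ 2 = ((x ^ 2 : ℝ) : ℂ) := by push_cast; rfl
  rw [mul_deriv_besselI hν (ofReal_mem_slitPlane.2 hx), besselI_eq_cpow_mul_besselSeries ν hx0,
    hsq, besselSeries_ofReal, ofReal_mul_deriv_besselSeries hν] at hroot
  set A := ∑' n : ℕ, besselCoeff ν n * (x ^ 2) ^ n
  set B := ∑' n : ℕ, (n : ℝ) * besselCoeff ν n * (x ^ 2) ^ n
  have hcpow : ((x : ℂ) / 2) ^ (ν : ℂ) ≠ 0 := fun h =>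
    div_ne_zero hx0 two_ne_zero ((cpow_eq_zero_iff _ _).1 h).1
  have hfactor :
      ((x : ℂ) / 2) ^ (ν : ℂ) * ((ν * A + 2 * B - β * ν * A : ℝ) : ℂ) = 0 := by
    push_cast at hroot ⊢
    linear_combination hroot
  have hreal := ofReal_eq_zero.1 ((mul_eq_zero.1 hfactor).resolve_left hcpow)
  linear_combination hreal

lemma besselCoeff_succ_mul_le {ν s : ℝ} (hν : -1 < ν) (hs : s ≤ 4 * (ν + 1)) (n : ℕ) :
    besselCoeff ν (n + 1) * s ≤ besselCoeff ν n := by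
  have hn : (0 : ℝ) ≤ n := n.cast_nonneg
  rw [besselCoeff_eq_mul_succ hν n, mul_comm _ (besselCoeff ν (n + 1))]
  refine mul_le_mul_of_nonneg_left (hs.trans ?_) (besselCoeff_pos hν _).le
  nlinarith

lemma tsum_besselCoeff_mul_neg_pow_pos {ν s : ℝ} (hν : -1 < ν) (hs : 0 < s)
    (hs' : s ≤ 4 * (ν + 1)) : 0 < ∑' n : ℕ, besselCoeff ν n * (-s) ^ n := by
  set f : ℕ → ℝ := fun n => besselCoeff ν n * s ^ n
  have hanti : Antitone f := antitone_nat_of_succ_le fun n => by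
    simp only [f, pow_succ, ← mul_assoc]
    rw [mul_right_comm]
    exact mul_le_mul_of_nonneg_right (besselCoeff_succ_mul_le hν hs' n) (pow_nonneg hs.le n)
  -- `f` may have `f 1 = f 0`, but `f 3 < f 2`: bound the sum below by four terms, not two
  have h32 : f 3 < f 2 := by
    have h23 := besselCoeff_eq_mul_succ hν 2
    have h3 := besselCoeff_pos hν 3
    calc f 3 = (besselCoeff ν 3 * s) * s ^ 2 := by ring
      _ < besselCoeff ν 2 * s ^ 2 := by
        refine mul_lt_mul_of_pos_right ?_ (pow_pos hs 2)
        rw [h23]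
        push_cast
        nlinarith
  have hsum : ∑' n : ℕ, besselCoeff ν n * (-s) ^ n = ∑' n : ℕ, (-1) ^ n * f n :=
    tsum_congr fun n => by simp only [f, neg_pow s]; ring
  rw [hsum]
  refine lt_of_lt_of_le ?_ (hanti.alternating_series_le_tendsto
    (summable_besselCoeff_mul_pow hν hs.le).tendsto_alternating_series_tsum 2)
  simp only [Finset.sum_range_succ, Finset.sum_range_zero]
  norm_num
  linarith [hanti (Nat.zero_le 1)]

lemma four_mul_add_one_lt_sq_of_besselJ_eq_zero {ν j : ℝ} (hν : -1 < ν) (hj : 0 < j)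
    (hJ : besselJ ν j = 0) : 4 * (ν + 1) < j ^ 2 := by
  by_contra! h
  have hj0 : (j : ℂ) ≠ 0 := ofReal_ne_zero.2 hj.ne'
  rw [besselJ_eq_cpow_mul_besselSeries ν hj0,
    show -(j : ℂ) ^ 2 = ((-j ^ 2 : ℝ) : ℂ) by push_cast; rfl, besselSeries_ofReal,
    mul_eq_zero, cpow_eq_zero_iff, ofReal_eq_zero] at hJ
  rcases hJ with ⟨h2, -⟩ | hP
  · exact div_ne_zero hj0 two_ne_zero h2
  · exact (tsum_besselCoeff_mul_neg_pow_pos hν (pow_pos hj 2) h).ne' hP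

lemma mul_tsum_besselCoeff_lt {ν s t : ℝ} (hν : -1 < ν) (ht : 0 < t) (hs : 4 * (ν + 1) < s) :
    t * ∑' n : ℕ, besselCoeff ν n * t ^ n <
      (s + t) * ∑' n : ℕ, (n : ℝ) * besselCoeff ν n * t ^ n := by
  have hA := summable_besselCoeff_mul_pow hν ht.le
  have hB := summable_natCast_mul_besselCoeff_mul_pow hν ht.le
  set A := ∑' n : ℕ, besselCoeff ν n * t ^ n
  set B := ∑' n : ℕ, (n : ℝ) * besselCoeff ν n * t ^ n
  have hAB : A - B ≤ besselCoeff ν 0 := by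
    refine hasSum_le (fun n => ?_) (hA.hasSum.sub hB.hasSum) (hasSum_ite_eq 0 _)
    rcases n with _ | n
    · simp
    · have := mul_nonneg (besselCoeff_pos hν (n + 1)).le (pow_nonneg ht.le (n + 1))
      push_cast
      nlinarith [mul_nonneg (n.cast_nonneg (α := ℝ)) this]
  have hB₁ : besselCoeff ν 1 * t ≤ B := by
    simpa using hB.le_tsum 1 fun n _ =>
      mul_nonneg (mul_nonneg n.cast_nonneg (besselCoeff_pos hν n).le) (pow_nonneg ht.le n)
  have h₀₁ : besselCoeff ν 0 = 4 * (ν + 1) * besselCoeff ν 1 := by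
    simpa using besselCoeff_eq_mul_succ hν 0
  have ha₁t : 0 < besselCoeff ν 1 * t := mul_pos (besselCoeff_pos hν 1) ht
  calc t * A = t * (A - B) + t * B := by ring
    _ ≤ t * besselCoeff ν 0 + t * B := by gcongr
    _ = 4 * (ν + 1) * (besselCoeff ν 1 * t) + t * B := by rw [h₀₁]; ring
    _ < s * (besselCoeff ν 1 * t) + t * B := by gcongr
    _ ≤ s * B + t * B := by gcongr; linarith
    _ = (s + t) * B := by ring

theorem sq_root_lt_first_zero_general (ν β x j₁ : ℝ) (hν₁ : -1 < ν) (hν₀ : ν < 0)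
    (hβ₀ : 0 ≤ β) (hj₁ : 0 < j₁) (hjzero : besselJ ν (j₁ : ℂ) = 0) (hx : 0 < x)
    (hroot : (x : ℂ) * deriv (besselI ν) (x : ℂ) - ((β * ν : ℝ) : ℂ) * besselI ν (x : ℂ) = 0) :
    x ^ 2 < (-(ν * (1 - β)) / (2 + ν * (1 - β))) * j₁ ^ 2 ∧
    (-(ν * (1 - β)) / (2 + ν * (1 - β))) * j₁ ^ 2 < j₁ ^ 2 ∧ x < j₁ := by
  have hc₁ : -(ν * (1 - β)) < 1 := by linarith [mul_nonpos_of_nonpos_of_nonneg hν₀.le hβ₀]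
  have hA : 0 < ∑' n : ℕ, besselCoeff ν n * (x ^ 2) ^ n :=
    (summable_besselCoeff_mul_pow hν₁ (sq_nonneg x)).tsum_pos
      (fun n => mul_nonneg (besselCoeff_pos hν₁ n).le (pow_nonneg (sq_nonneg x) n)) 0
      (by simpa using besselCoeff_pos hν₁ 0)
  have hB := two_mul_tsum_eq_of_root hν₁ hx hroot
  have hAB := mul_tsum_besselCoeff_lt hν₁ (pow_pos hx 2)
    (four_mul_add_one_lt_sq_of_besselJ_eq_zero hν₁ hj₁ hjzero)
  have h2t : 2 * x ^ 2 < -(ν * (1 - β)) * (j₁ ^ 2 + x ^ 2) := by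
    refine lt_of_mul_lt_mul_right ?_ hA.le
    linear_combination 2 * hAB + (j₁ ^ 2 + x ^ 2) * hB
  have hden : 0 < 2 + ν * (1 - β) := by linarith
  have hfirst : x ^ 2 < -(ν * (1 - β)) / (2 + ν * (1 - β)) * j₁ ^ 2 := by
    rw [div_mul_eq_mul_div, lt_div_iff₀ hden]
    linarith
  have hsecond : -(ν * (1 - β)) / (2 + ν * (1 - β)) * j₁ ^ 2 < j₁ ^ 2 := by
    rw [div_mul_eq_mul_div, div_lt_iff₀ hden]
    nlinarith [pow_pos hj₁ 2]
  exact ⟨hfirst, hsecond,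
    (pow_lt_pow_iff_left₀ hx.le hj₁.le two_ne_zero).1 (hfirst.trans hsecond)⟩

/-- For `ν ∈ (-1,0)`, `0 ≤ β < 1`, and `x` a positive root of
`r I_ν'(r) - βν I_ν(r) = 0`, one has
`x² < (-ν(1-β)/(2 + ν(1-β))) j_{ν,1}² < j_{ν,1}²`; in particular `x < j_{ν,1}`. -/
theorem sq_root_lt_first_zero (ν β x j₁ : ℝ) (hν₁ : -1 < ν) (hν₀ : ν < 0)
    (hβ₀ : 0 ≤ β) (hβ₁ : β < 1) (hj₁ : 0 < j₁) (hjzero : besselJ ν (j₁ : ℂ) = 0)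
    (hjmin : ∀ t : ℝ, 0 < t → besselJ ν (t : ℂ) = 0 → j₁ ≤ t) (hx : 0 < x)
    (hroot : (x : ℂ) * deriv (besselI ν) (x : ℂ) - ((β * ν : ℝ) : ℂ) * besselI ν (x : ℂ) = 0) :
    x ^ 2 < (-(ν * (1 - β)) / (2 + ν * (1 - β))) * j₁ ^ 2 ∧
    (-(ν * (1 - β)) / (2 + ν * (1 - β))) * j₁ ^ 2 < j₁ ^ 2 ∧ x < j₁ :=
  sq_root_lt_first_zero_general ν β x j₁ hν₁ hν₀ hβ₀ hj₁ hjzero hx hroot
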